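/- Define K(m,n) = Σ_{r=0}^{m+n} S(m,n,r)/(r+2)², where S(m,n,r) is the coefficient of x^{r+1} in the polynomial p_m(x)·q_{n+1}(x) and q_{n+1}(x) = ∫₀ˣ p_n(t) dt. Then: (i) if m, n are natural numbers with |m−n| ≥ 2, then K(m,n) + K(n,m) = 0; (ii) for every natural number n ≥ 1, 2·K(n,n) = 1/( n(2n+1)(2n+2) ); and (iii) for every natural number n, K(n+1,n) + K(n,n+1) = −1/( (2n+1)(2n+2)(2n+3) ). -/

import Mathlib

open Polynomial

/-- The shifted Legendre polynomial `pₙ(x) = (1/n!) dⁿ/dxⁿ (xⁿ(x-1)ⁿ)`, as a polynomial. -/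
noncomputable def shiftedLegendrePoly (n : ℕ) : Polynomial ℝ :=
  C ((Nat.factorial n : ℝ))⁻¹ * (derivative^[n] (X ^ n * (X - 1) ^ n))

/-- The integrated shifted Legendre polynomial `q_{n+1}(x) = ∫₀ˣ pₙ(t) dt`. -/
noncomputable def qPoly (n : ℕ) : Polynomial ℝ :=
  ∑ k ∈ Finset.range (n + 1), C ((shiftedLegendrePoly n).coeff k / ((k : ℝ) + 1)) * X ^ (k + 1)

/-- `S m n r` is the coefficient of `x^(r+1)` in `p_m(x) * q_{n+1}(x)`. -/
noncomputable def S (m n r : ℕ) : ℝ := (shiftedLegendrePoly m * qPoly n).coeff (r + 1)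


/-- `K m n = ∑_{r=0}^{m+n} S(m,n,r)/(r+2)²`. -/
noncomputable def K (m n : ℕ) : ℝ := ∑ r ∈ Finset.range (m + n + 1), S m n r / ((r : ℝ) + 2) ^ 2

/-!
Since `q_{n+1}' = p_n` and `q_{n+1}(0) = 0`, the coefficient of `x^(r+1)` in
`p_m q_{n+1} + p_n q_{m+1} = (q_{m+1} q_{n+1})'` is `r + 2` times that of `x^(r+2)` in
`q_{m+1} q_{n+1}`, so `K(m,n) + K(n,m) = ∫₀¹ q_{m+1}(x) q_{n+1}(x) / x dx`. The Legendre equation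
integrates to `m(m+1) q_{m+1} = x(x-1) p_m'`, and one integration by parts gives
`m(m+1) (K(m,n) + K(n,m)) = -∫₀¹ q_{n+1} p_m - ∫₀¹ (x-1) p_n p_m`.
Rodrigues' formula and `m` integrations by parts give `∫₀¹ g p_m = g_m / ((2m+1) C(2m,m))` whenever
`deg g ≤ m`, `g_m` being the coefficient of `x^m` in `g`. This settles `|m - n| ≥ 2` and
`m = n + 1`; for `m = n ≥ 1` use instead `∫₀¹ q_{n+1} p_n = q_{n+1}(1)² / 2 = 0` and, from
`p_n(1-x) = (-1)^n p_n(x)`, `∫₀¹ x p_n² = ½ ∫₀¹ p_n²`.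
-/

open Nat

namespace ShiftedLegendreMoments

lemma eval_iterate_derivative_eq_zero_of_pow_dvd {R : Type*} [CommRing R] {f : R[X]} {a : R}
    {n i : ℕ} (hf : (X - C a) ^ n ∣ f) (hi : i < n) : (derivative^[i] f).eval a = 0 :=
  dvd_iff_isRoot.mp <| (dvd_pow_self _ (Nat.sub_ne_zero_of_lt hi)).trans
    (pow_sub_dvd_iterate_derivative_of_pow_dvd i hf)

lemma iterate_derivative_eq_C_of_natDegree_le {R : Type*} [CommSemiring R] {g : R[X]} {n : ℕ}
    (hg : g.natDegree ≤ n) : derivative^[n] g = C (n ! * g.coeff n) := by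
  rw [eq_C_of_natDegree_le_zero ((natDegree_iterate_derivative g n).trans (by omega)),
    coeff_iterate_derivative, zero_add, Nat.descFactorial_self, nsmul_eq_mul]

lemma X_pow_mul_X_sub_one_pow {R : Type*} [CommRing R] (n : ℕ) :
    (X ^ n * (X - 1) ^ n : R[X]) = C ((-1) ^ n) * (X ^ n * (1 - X) ^ n) := by
  rw [C_pow, C_neg, C_1, ← neg_sub, neg_pow]
  ring

noncomputable def integral01 : ℝ[X] →ₗ[ℝ] ℝ where
  toFun h := ∫ x in (0 : ℝ)..1, h.eval x
  map_add' g h := by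
    simp only [eval_add]
    exact intervalIntegral.integral_add (g.continuous.intervalIntegrable _ _)
      (h.continuous.intervalIntegrable _ _)
  map_smul' c h := by
    simp only [eval_smul, smul_eq_mul, RingHom.id_apply]
    exact intervalIntegral.integral_const_mul c _

lemma integral01_apply (h : ℝ[X]) : integral01 h = ∫ x in (0 : ℝ)..1, h.eval x := rfl

lemma integral01_C_mul (c : ℝ) (h : ℝ[X]) : integral01 (C c * h) = c * integral01 h := by
  rw [← smul_eq_C_mul, map_smul, smul_eq_mul]

lemma integral01_derivative (h : ℝ[X]) : integral01 (derivative h) = h.eval 1 - h.eval 0 :=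
  intervalIntegral.integral_eq_sub_of_hasDerivAt (fun x _ => h.hasDerivAt x)
    (h.derivative.continuous.intervalIntegrable _ _)

lemma integral01_mul_derivative (g h : ℝ[X]) :
    integral01 (g * derivative h) =
      (g * h).eval 1 - (g * h).eval 0 - integral01 (derivative g * h) := by
  rw [← integral01_derivative, derivative_mul, map_add]
  ring

lemma integral01_X_pow (k : ℕ) : integral01 (X ^ k) = 1 / (k + 1) := by
  simp [integral01_apply, integral_pow]

lemma integral01_eq_sum {h : ℝ[X]} {N : ℕ} (hN : h.natDegree < N) :
    integral01 h = ∑ s ∈ Finset.range N, h.coeff s / (s + 1) := by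
  conv_lhs => rw [h.as_sum_range' N hN]
  simp only [← smul_X_eq_monomial, map_sum, map_smul, integral01_X_pow, smul_eq_mul, mul_one_div]

lemma integral01_comp_one_sub_X (h : ℝ[X]) : integral01 (h.comp (1 - X)) = integral01 h := by
  simpa [integral01_apply] using intervalIntegral.integral_comp_sub_left (fun x => h.eval x) (1 : ℝ)
    (a := 0) (b := 1)

lemma integral01_X_pow_mul_one_sub_X_pow (a b : ℕ) :
    integral01 (X ^ a * (1 - X) ^ b) = a ! * b ! / (a + b + 1)! := by
  induction b generalizing a with
  | zero =>
    rw [pow_zero, mul_one, integral01_X_pow, add_zero, Nat.factorial_succ, Nat.factorial_zero]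
    push_cast
    field_simp
  | succ b ih =>
    have hX : X ^ a = derivative (C ((a : ℝ) + 1)⁻¹ * X ^ (a + 1)) := by
      rw [derivative_C_mul_X_pow, Nat.cast_add_one, Nat.add_sub_cancel,
        inv_mul_cancel₀ (by positivity), C_1, one_mul]
    have hd : derivative ((1 - X : ℝ[X]) ^ (b + 1)) = -C ((b : ℝ) + 1) * (1 - X) ^ b := by
      rw [derivative_pow, derivative_sub, derivative_one, derivative_X, Nat.add_sub_cancel,
        Nat.cast_add_one]
      ring
    have hrw : -C ((b : ℝ) + 1) * (1 - X) ^ b * (C ((a : ℝ) + 1)⁻¹ * X ^ (a + 1)) =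
        C (-(((b : ℝ) + 1) / (a + 1))) * (X ^ (a + 1) * (1 - X) ^ b) := by
      rw [C_neg, div_eq_mul_inv, C_mul]; ring
    rw [mul_comm, hX, integral01_mul_derivative, hd, hrw, integral01_C_mul, ih,
      show a + 1 + b + 1 = a + (b + 1) + 1 by ring, Nat.factorial_succ a, Nat.factorial_succ b]
    simp only [eval_mul, eval_pow, eval_sub, eval_one, eval_X, eval_C, sub_self, sub_zero,
      zero_pow (Nat.succ_ne_zero _), zero_mul, mul_zero]
    push_cast
    field_simp
    ring

lemma integral01_mul_iterate_derivative {h : ℝ[X]} {j : ℕ}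
    (h₀ : ∀ i < j, (derivative^[i] h).eval 0 = 0) (h₁ : ∀ i < j, (derivative^[i] h).eval 1 = 0)
    (g : ℝ[X]) :
    integral01 (g * derivative^[j] h) = (-1) ^ j * integral01 (derivative^[j] g * h) := by
  induction j generalizing g with
  | zero => simp
  | succ j ih =>
    rw [Function.iterate_succ_apply', integral01_mul_derivative, eval_mul, eval_mul,
      h₀ j j.lt_succ_self, h₁ j j.lt_succ_self,
      ih (fun i hi => h₀ i (hi.trans j.lt_succ_self)) (fun i hi => h₁ i (hi.trans j.lt_succ_self)),
      ← Function.iterate_succ_apply]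
    ring

local notation "p" => shiftedLegendrePoly

lemma shiftedLegendrePoly_eq_map (n : ℕ) :
    p n = C ((-1) ^ n) * (shiftedLegendre n).map (Int.castRingHom ℝ) := by
  have hR := congrArg (map (Int.castRingHom ℝ)) (factorial_mul_shiftedLegendre_eq n)
  simp only [Polynomial.map_mul, Polynomial.map_natCast, ← iterate_derivative_map,
    Polynomial.map_pow, Polynomial.map_sub, Polynomial.map_one, map_X] at hR
  rw [shiftedLegendrePoly, X_pow_mul_X_sub_one_pow, iterate_derivative_C_mul, ← hR,
    ← C_eq_natCast, ← mul_assoc, ← mul_assoc, ← C_mul, ← C_mul]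
  congr 2
  field_simp

lemma coeff_shiftedLegendrePoly (n k : ℕ) :
    (p n).coeff k = (-1) ^ n * (-1) ^ k * n.choose k * (n + k).choose n := by
  rw [shiftedLegendrePoly_eq_map, coeff_C_mul, coeff_map, coeff_shiftedLegendre, eq_intCast]
  push_cast
  ring

lemma natDegree_shiftedLegendrePoly_le (n : ℕ) : (p n).natDegree ≤ n := by
  rw [shiftedLegendrePoly_eq_map]
  exact (natDegree_C_mul_le _ _).trans (natDegree_map_le.trans (natDegree_shiftedLegendre n).le)

lemma natDegree_X_sub_one_mul_shiftedLegendrePoly_le (n : ℕ) :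
    ((X - 1) * p n).natDegree ≤ n + 1 := by
  refine natDegree_mul_le.trans ?_
  have := natDegree_shiftedLegendrePoly_le n
  have : (X - 1 : ℝ[X]).natDegree = 1 := natDegree_X_sub_C 1
  omega

lemma coeff_shiftedLegendrePoly_self (n : ℕ) : (p n).coeff n = n.centralBinom := by
  rw [coeff_shiftedLegendrePoly, Nat.choose_self, Nat.centralBinom_eq_two_mul_choose, two_mul]
  simp [← mul_pow]

-- The Legendre equation `x(x-1) p'' + (2x-1) p' = n(n+1) p`, read off coefficientwise.
lemma coeff_shiftedLegendrePoly_succ (n k : ℕ) :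
    ((k : ℝ) + 1) ^ 2 * (p n).coeff (k + 1) = (k * (k + 1) - n * (n + 1)) * (p n).coeff k := by
  have h₁ : (n.choose (k + 1) : ℝ) * (k + 1) = n.choose k * (n - k) := by
    rcases le_or_gt k n with hk | hk
    · rw [← Nat.cast_sub hk]
      exact_mod_cast Nat.choose_succ_right_eq n k
    · simp [Nat.choose_eq_zero_of_lt hk, Nat.choose_eq_zero_of_lt (hk.trans k.lt_succ_self)]
  have h₂ : ((n + (k + 1)).choose n : ℝ) * (k + 1) = (n + k).choose n * (n + k + 1) := by
    rw [Nat.choose_symm_add, @Nat.choose_symm_add n k]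
    exact_mod_cast ((Nat.add_one_mul_choose_eq (n + k) k).symm.trans (mul_comm _ _))
  rw [coeff_shiftedLegendrePoly, coeff_shiftedLegendrePoly]
  linear_combination (-(-1 : ℝ) ^ n * (-1) ^ k) *
    ((n.choose (k + 1) : ℝ) * (k + 1) * h₂ + ((n + k).choose n : ℝ) * (n + k + 1) * h₁)

lemma shiftedLegendrePoly_comp_one_sub_X (n : ℕ) : (p n).comp (1 - X) = C ((-1) ^ n) * p n := by
  set P := (shiftedLegendre n).map (Int.castRingHom ℝ)
  have h : (-1) ^ n * P.comp (1 - X) = P := by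
    simpa [map_comp] using
      congrArg (map (Int.castRingHom ℝ)) (neg_one_pow_mul_shiftedLegendre_comp_one_sub_X_eq n)
  have hP : P.comp (1 - X) = (-1) ^ n * P := by
    nth_rw 2 [← h]
    rw [← mul_assoc, ← mul_pow]
    simp
  rw [shiftedLegendrePoly_eq_map, mul_comp, C_comp, hP, C_pow, C_neg, C_1]

lemma integral01_mul_shiftedLegendrePoly_eq_iterate_derivative (g : ℝ[X]) (n : ℕ) :
    integral01 (g * p n) =
      (-1) ^ n / n ! * integral01 (derivative^[n] g * (X ^ n * (X - 1) ^ n)) := by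
  have h₀ : ∀ i < n, (derivative^[i] (X ^ n * (X - 1) ^ n : ℝ[X])).eval 0 = 0 := fun i hi =>
    eval_iterate_derivative_eq_zero_of_pow_dvd (by simp) hi
  have h₁ : ∀ i < n, (derivative^[i] (X ^ n * (X - 1) ^ n : ℝ[X])).eval 1 = 0 := fun i hi =>
    eval_iterate_derivative_eq_zero_of_pow_dvd (by simp) hi
  rw [shiftedLegendrePoly, mul_left_comm, integral01_C_mul, integral01_mul_iterate_derivative h₀ h₁]
  ring

lemma integral01_mul_shiftedLegendrePoly {g : ℝ[X]} {n : ℕ} (hg : g.natDegree ≤ n) :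
    integral01 (g * p n) = g.coeff n / ((2 * n + 1) * n.centralBinom) := by
  have hfac : (n.centralBinom * n ! * n ! : ℝ) = (2 * n)! := by
    rw [Nat.centralBinom_eq_two_mul_choose, two_mul]
    exact_mod_cast Nat.add_choose_mul_factorial_mul_factorial n n
  rw [integral01_mul_shiftedLegendrePoly_eq_iterate_derivative,
    iterate_derivative_eq_C_of_natDegree_le hg, X_pow_mul_X_sub_one_pow, ← mul_assoc, ← C_mul,
    integral01_C_mul, integral01_X_pow_mul_one_sub_X_pow, show n + n + 1 = 2 * n + 1 by ring,
    Nat.factorial_succ]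
  have hsq : ((-1 : ℝ) ^ n) ^ 2 = 1 := by rw [← pow_mul, pow_mul', neg_one_sq, one_pow]
  push_cast
  rw [← hfac]
  field_simp
  rw [hsq, one_mul]

lemma integral01_shiftedLegendrePoly_sq (n : ℕ) : integral01 (p n * p n) = 1 / (2 * n + 1) := by
  rw [integral01_mul_shiftedLegendrePoly (natDegree_shiftedLegendrePoly_le n),
    coeff_shiftedLegendrePoly_self]
  have : (n.centralBinom : ℝ) ≠ 0 := Nat.cast_ne_zero.mpr n.centralBinom_ne_zero
  field_simp

lemma integral01_X_mul_shiftedLegendrePoly_sq (n : ℕ) :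
    integral01 (X * (p n * p n)) = 1 / (2 * n + 1) / 2 := by
  have hsq : (C ((-1 : ℝ) ^ n) * C ((-1) ^ n) : ℝ[X]) = 1 := by
    rw [← C_mul, ← mul_pow]
    simp
  have hcomp : (X * (p n * p n)).comp (1 - X) = p n * p n - X * (p n * p n) := by
    rw [mul_comp, mul_comp, shiftedLegendrePoly_comp_one_sub_X, X_comp]
    linear_combination (1 - X) * p n * p n * hsq
  have h := integral01_comp_one_sub_X (X * (p n * p n))
  rw [hcomp, map_sub, integral01_shiftedLegendrePoly_sq] at h
  linarith

local notation "q" => qPoly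

lemma coeff_qPoly_zero (n : ℕ) : (q n).coeff 0 = 0 := by
  simp [qPoly, finsetSum_coeff, coeff_X_pow]

lemma coeff_qPoly_succ (n k : ℕ) : (q n).coeff (k + 1) = (p n).coeff k / (k + 1) := by
  simp only [qPoly, finsetSum_coeff, coeff_C_mul_X_pow, add_left_inj]
  rw [Finset.sum_ite_eq, ite_eq_left_iff, Finset.mem_range, not_lt]
  intro hk
  rw [coeff_eq_zero_of_natDegree_lt ((natDegree_shiftedLegendrePoly_le n).trans_lt hk), zero_div]

lemma derivative_qPoly (n : ℕ) : derivative (q n) = p n := by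
  ext k
  rw [coeff_derivative, coeff_qPoly_succ, div_mul_cancel₀ _ (by positivity)]

lemma eval_qPoly_zero (n : ℕ) : (q n).eval 0 = 0 := by
  rw [← coeff_zero_eq_eval_zero, coeff_qPoly_zero]

lemma natDegree_qPoly_le (n : ℕ) : (q n).natDegree ≤ n + 1 := by
  rw [natDegree_le_iff_coeff_eq_zero]
  rintro (_ | k) hk
  · omega
  · rw [coeff_qPoly_succ, coeff_eq_zero_of_natDegree_lt
      ((natDegree_shiftedLegendrePoly_le n).trans_lt (by omega)), zero_div]

lemma eval_qPoly_one {n : ℕ} (hn : n ≠ 0) : (q n).eval 1 = 0 := by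
  have h := integral01_derivative (q n)
  rw [derivative_qPoly, eval_qPoly_zero, sub_zero, ← one_mul (p n),
    integral01_mul_shiftedLegendrePoly (by simp), coeff_one, if_neg hn, zero_div] at h
  exact h.symm

lemma C_mul_divX_qPoly (m : ℕ) :
    C ((m : ℝ) * (m + 1)) * (q m).divX = (X - 1) * derivative (p m) := by
  ext k
  rw [coeff_C_mul, coeff_divX, coeff_qPoly_succ, sub_mul, one_mul, coeff_sub]
  rcases k with _ | k
  · have h := coeff_shiftedLegendrePoly_succ m 0
    rw [coeff_X_mul_zero, coeff_derivative]
    push_cast at h ⊢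
    linear_combination h
  · have h := coeff_shiftedLegendrePoly_succ m (k + 1)
    rw [coeff_X_mul, coeff_derivative, coeff_derivative]
    push_cast at h ⊢
    field_simp
    linear_combination h

lemma K_add_K_eq_integral01 (m n : ℕ) : K m n + K n m = integral01 ((q m).divX * q n) := by
  have hq : q m = X * (q m).divX := by
    simpa [coeff_qPoly_zero] using (X_mul_divX_add (q m)).symm
  have hdeg : ((q m).divX * q n).natDegree < m + n + 1 + 1 := by
    have := natDegree_qPoly_le m
    refine natDegree_mul_le.trans_lt ?_
    rw [natDegree_divX_eq_natDegree_tsub_one]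
    have := natDegree_qPoly_le n
    omega
  rw [integral01_eq_sum hdeg, Finset.sum_range_succ', mul_coeff_zero, coeff_qPoly_zero, mul_zero,
    zero_div, add_zero, K, K, add_comm n m, ← Finset.sum_add_distrib]
  refine Finset.sum_congr rfl fun r _ => ?_
  have hS : S m n r + S n m r = (q m * q n).coeff (r + 1 + 1) * (r + 2) := by
    rw [S, S, mul_comm (p n), ← coeff_add, ← derivative_qPoly, ← derivative_qPoly, ← derivative_mul,
      coeff_derivative]
    push_cast
    ring
  have hc : (q m * q n).coeff (r + 1 + 1) = ((q m).divX * q n).coeff (r + 1) := by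
    conv_lhs => rw [hq, mul_assoc, coeff_X_mul]
  rw [← add_div, hS, hc]
  push_cast
  field_simp
  ring

lemma mul_K_add_K (m n : ℕ) :
    (m : ℝ) * (m + 1) * (K m n + K n m) =
      -integral01 (q n * p m) - integral01 ((X - 1) * p n * p m) := by
  have h₁ : ((X - 1) * q n * p m).eval 1 = 0 := by simp
  have h₀ : ((X - 1) * q n * p m).eval 0 = 0 := by simp [eval_qPoly_zero]
  rw [K_add_K_eq_integral01, ← integral01_C_mul, ← mul_assoc, C_mul_divX_qPoly,
    show (X - 1) * derivative (p m) * q n = (X - 1) * q n * derivative (p m) by ring,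
    integral01_mul_derivative, derivative_mul, derivative_qPoly, derivative_sub, derivative_X,
    derivative_one, sub_zero, one_mul, add_mul, map_add, h₁, h₀]
  ring

lemma K_add_K_of_add_two_le {m n : ℕ} (h : n + 2 ≤ m) : K m n + K n m = 0 := by
  have hK := mul_K_add_K m n
  rw [integral01_mul_shiftedLegendrePoly ((natDegree_qPoly_le n).trans (by omega)),
    coeff_eq_zero_of_natDegree_lt ((natDegree_qPoly_le n).trans_lt (by omega)),
    integral01_mul_shiftedLegendrePoly
      ((natDegree_X_sub_one_mul_shiftedLegendrePoly_le n).trans (by omega)),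
    coeff_eq_zero_of_natDegree_lt
      ((natDegree_X_sub_one_mul_shiftedLegendrePoly_le n).trans_lt (by omega))] at hK
  have hm : (m : ℝ) * (m + 1) ≠ 0 := by
    have : (0 : ℝ) < m := by exact_mod_cast (by omega : 0 < m)
    positivity
  simpa [hm] using hK

lemma integral01_qPoly_mul_shiftedLegendrePoly {n : ℕ} (hn : n ≠ 0) :
    integral01 (q n * p n) = 0 := by
  have h := integral01_derivative (q n * q n)
  rw [derivative_mul, derivative_qPoly, eval_mul, eval_mul, eval_qPoly_one hn, eval_qPoly_zero,
    map_add, mul_comm (p n)] at h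
  linarith

lemma two_mul_K_self {n : ℕ} (hn : n ≠ 0) :
    2 * K n n = 1 / (n * (2 * n + 1) * (2 * n + 2)) := by
  have hK := mul_K_add_K n n
  rw [integral01_qPoly_mul_shiftedLegendrePoly hn,
    show (X - 1) * p n * p n = X * (p n * p n) - p n * p n by ring, map_sub,
    integral01_X_mul_shiftedLegendrePoly_sq, integral01_shiftedLegendrePoly_sq] at hK
  have : (n : ℝ) ≠ 0 := by exact_mod_cast hn
  field_simp at hK ⊢
  linear_combination hK

lemma K_succ_add_K (n : ℕ) :
    K (n + 1) n + K n (n + 1) = -(1 / ((2 * n + 1) * (2 * n + 2) * (2 * n + 3))) := by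
  have hK := mul_K_add_K (n + 1) n
  have hcoeff : ((X - 1) * p n).coeff (n + 1) = (n.centralBinom : ℝ) := by
    rw [sub_mul, one_mul, coeff_sub, coeff_X_mul, coeff_shiftedLegendrePoly_self,
      coeff_eq_zero_of_natDegree_lt ((natDegree_shiftedLegendrePoly_le n).trans_lt n.lt_succ_self),
      sub_zero]
  rw [integral01_mul_shiftedLegendrePoly (natDegree_qPoly_le n), coeff_qPoly_succ,
    coeff_shiftedLegendrePoly_self,
    integral01_mul_shiftedLegendrePoly (natDegree_X_sub_one_mul_shiftedLegendrePoly_le n),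
    hcoeff] at hK
  have hcb : ((n + 1 : ℕ) : ℝ) * (n + 1).centralBinom = 2 * (2 * n + 1) * n.centralBinom := by
    exact_mod_cast Nat.succ_mul_centralBinom_succ n
  have hcb₀ : (n.centralBinom : ℝ) ≠ 0 := Nat.cast_ne_zero.mpr n.centralBinom_ne_zero
  have : ((n + 1).centralBinom : ℝ) ≠ 0 := Nat.cast_ne_zero.mpr (n + 1).centralBinom_ne_zero
  push_cast at hK hcb
  field_simp at hK ⊢
  apply mul_left_cancel₀ (mul_ne_zero hcb₀ (by positivity : (n : ℝ) + 2 ≠ 0))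
  linear_combination hK - (n + 1) * (n + 2) * (2 * n + 3) * (K (n + 1) n + K n (n + 1)) * hcb

end ShiftedLegendreMoments

theorem stmt19 :
    (∀ m n : ℕ, 2 ≤ ((m : ℤ) - n).natAbs → K m n + K n m = 0) ∧
    (∀ n : ℕ, 1 ≤ n →
      2 * K n n = 1 / ((n : ℝ) * (2 * (n : ℝ) + 1) * (2 * (n : ℝ) + 2))) ∧
    (∀ n : ℕ,
      K (n + 1) n + K n (n + 1) =
        -(1 / ((2 * (n : ℝ) + 1) * (2 * (n : ℝ) + 2) * (2 * (n : ℝ) + 3)))) := by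
  refine ⟨fun m n h => ?_, fun n hn => ShiftedLegendreMoments.two_mul_K_self (by omega),
    ShiftedLegendreMoments.K_succ_add_K⟩
  rcases (by omega : n + 2 ≤ m ∨ m + 2 ≤ n) with h | h
  · exact ShiftedLegendreMoments.K_add_K_of_add_two_le h
  · rw [add_comm]
    exact ShiftedLegendreMoments.K_add_K_of_add_two_le h
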